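/- Let ĝ = (g, g−1, …, 1) ∈ ℤ^g. Then ĝ K = (g+1) L e_1. Consequently: (1) for every m ∈ ℤ^g and Z ∈ D_m one has Z − (g+1)L e_1 ∈ D_{m + ĝ}, and Z − (g+1)L e_1 ≡ Z modulo the lattice ℤ^g K; (2) for every Z_0 ∈ ℝ^g the function T_n^t = Θ(Z_n^t) satisfies T_{n+g+1}^t = T_n^t + c_n^t, where c_n^t = −gL·n + (∑_{i=1}^{g}(λ_i − λ_0))·t + ĝ·Z_0ᵀ − (1/2) ĝ K ĝᵀ. -/

import Mathlib

open Matrix Finset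

noncomputable section

namespace TropToda

variable (g : ℕ)

/-- The summand `(1/2) m K mᵀ + m Zᵀ` in the definition of the tropical theta function. -/
def thetaTerm (K : Matrix (Fin g) (Fin g) ℝ) (m : Fin g → ℤ) (Z : Fin g → ℝ) : ℝ :=
  (1/2) * (Matrix.vecMul (fun i => (m i : ℝ)) K ⬝ᵥ fun i => (m i : ℝ))
    + (fun i => (m i : ℝ)) ⬝ᵥ Z

/-- The tropical Riemann theta function associated with `K`. -/
def theta (K : Matrix (Fin g) (Fin g) ℝ) (Z : Fin g → ℝ) : ℝ :=
  sInf (Set.range fun m : Fin g → ℤ => thetaTerm g K m Z)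

/-- The fundamental region `D_m`. -/
def Dset (K : Matrix (Fin g) (Fin g) ℝ) (m : Fin g → ℤ) : Set (Fin g → ℝ) :=
  {Z | theta g K Z = thetaTerm g K m Z}

/-- The generic condition on `C = (C_{-1}, C_0, …, C_g)`. -/
def Generic (C : ℤ → ℝ) : Prop :=
  C (-1) > 2 * C 0 ∧
  (∀ i : ℤ, 0 ≤ i → i ≤ (g : ℤ) - 2 → C i + C (i + 2) > 2 * C (i + 1)) ∧
  C ((g : ℤ) - 1) > 2 * C (g : ℤ)

/-- `L = C_{-1} − 2(g+1) C_g`. -/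
def Lc (C : ℤ → ℝ) : ℝ := C (-1) - 2 * (g + 1) * C (g : ℤ)

/-- `λ_0 = C_g`, `λ_i = C_{g−i} − C_{g−i+1}` for `1 ≤ i ≤ g`. -/
def lam (C : ℤ → ℝ) (i : ℕ) : ℝ :=
  if i = 0 then C (g : ℤ) else C ((g : ℤ) - i) - C ((g : ℤ) - i + 1)

/-- `p_0 = L`, `p_i = L − 2 ∑_{j=1}^g min(λ_i − λ_0, λ_j − λ_0)`. -/
def pc (C : ℤ → ℝ) (i : ℕ) : ℝ :=
  if i = 0 then Lc g C
  else Lc g C - 2 * ∑ j ∈ Finset.Icc 1 g,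
    min (lam g C i - lam g C 0) (lam g C j - lam g C 0)

/-- The tridiagonal period matrix `K` (0-based index `a` corresponds to the paper's `a+1`). -/
def Kmat (C : ℤ → ℝ) : Matrix (Fin g) (Fin g) ℝ := fun a b =>
  if a = b then
    pc g C (a : ℕ) + pc g C ((a : ℕ) + 1) + 2 * (lam g C ((a : ℕ) + 1) - lam g C (a : ℕ))
  else if (a : ℕ) + 1 = (b : ℕ) then -(pc g C ((a : ℕ) + 1))
  else if (b : ℕ) + 1 = (a : ℕ) then -(pc g C ((b : ℕ) + 1))
  else 0

/-- The first standard basis (row) vector `e_1`. -/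
def e1 : Fin g → ℝ := fun i => if (i : ℕ) = 0 then 1 else 0

/-- `λ⃗ = (λ_1 − λ_0, …, λ_g − λ_{g−1})`. -/
def lamvec (C : ℤ → ℝ) : Fin g → ℝ := fun i => lam g C ((i : ℕ) + 1) - lam g C (i : ℕ)

/-- `Z_n^t = Z_0 − nL e_1 + t λ⃗`. -/
def Zpt (C : ℤ → ℝ) (Z0 : Fin g → ℝ) (n t : ℤ) : Fin g → ℝ :=
  fun i => Z0 i - (n : ℝ) * Lc g C * e1 g i + (t : ℝ) * lamvec g C i

/-- `T_n^t = Θ(Z_n^t)`. -/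
def Tf (C : ℤ → ℝ) (Z0 : Fin g → ℝ) (n t : ℤ) : ℝ :=
  theta g (Kmat g C) (Zpt g C Z0 n t)

/-- `Q_n^t = T_{n−1}^t + T_n^{t+1} − T_{n−1}^{t+1} − T_n^t + C_g`. -/
def Qf (C : ℤ → ℝ) (Z0 : Fin g → ℝ) (n t : ℤ) : ℝ :=
  Tf g C Z0 (n - 1) t + Tf g C Z0 n (t + 1) - Tf g C Z0 (n - 1) (t + 1)
    - Tf g C Z0 n t + C (g : ℤ)

/-- `W_n^t = L + T_{n−1}^{t+1} + T_{n+1}^t − T_n^t − T_n^{t+1} + C_g`. -/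
def Wf (C : ℤ → ℝ) (Z0 : Fin g → ℝ) (n t : ℤ) : ℝ :=
  Lc g C + Tf g C Z0 (n - 1) (t + 1) + Tf g C Z0 (n + 1) t - Tf g C Z0 n t
    - Tf g C Z0 n (t + 1) + C (g : ℤ)

/-- `σ_t ∘ ι_t : ℝ^g → ℝ^{2(g+1)}`, recording `(Q_n^t, W_n^t)_{n ∈ ℤ/(g+1)ℤ}`. -/
def sigmaIota (C : ℤ → ℝ) (t : ℤ) (Z0 : Fin g → ℝ) :
    (ZMod (g + 1) → ℝ) × (ZMod (g + 1) → ℝ) :=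
  (fun n => Qf g C Z0 (n.val : ℤ) t, fun n => Wf g C Z0 (n.val : ℤ) t)

/-- The tridiagonal matrix `J` with `2` on the diagonal and `−1` off it. -/
def Jmat : Matrix (Fin g) (Fin g) ℝ := fun a b =>
  if a = b then 2
  else if (a : ℕ) + 1 = (b : ℕ) then -1
  else if (b : ℕ) + 1 = (a : ℕ) then -1
  else 0

/-- `X_n = min_{k=0,…,g} ∑_{l=1}^k (W_{n−l} − Q_{n−l})`, indices mod `g+1`. -/
def todaX (Q W : ZMod (g + 1) → ℝ) (n : ZMod (g + 1)) : ℝ :=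
  ⨅ k : Fin (g + 1), ∑ l ∈ Finset.Icc 1 (k : ℕ),
    (W (n - (l : ZMod (g + 1))) - Q (n - (l : ZMod (g + 1))))

/-- The ultra-discrete periodic Toda evolution map. -/
def todaMap (QW : (ZMod (g + 1) → ℝ) × (ZMod (g + 1) → ℝ)) :
    (ZMod (g + 1) → ℝ) × (ZMod (g + 1) → ℝ) :=
  (fun n => min (QW.2 n) (QW.1 n - todaX g QW.1 QW.2 n),
   fun n => QW.1 (n + 1) + QW.2 n - min (QW.2 n) (QW.1 n - todaX g QW.1 QW.2 n))

/-- `Z̃_n^t = Z_{n_0}^0 − (n − n_0)(L + δ) e_1 + t λ⃗`. -/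
def Ztil (C : ℤ → ℝ) (Z0 : Fin g → ℝ) (n0 : ℤ) (δ : ℝ) (n t : ℤ) : Fin g → ℝ :=
  fun i => Zpt g C Z0 n0 0 i - ((n : ℝ) - (n0 : ℝ)) * (Lc g C + δ) * e1 g i
    + (t : ℝ) * lamvec g C i

/-- The theta function `Θ̃` associated with `K̃ = K + δJ`. -/
def thetaTil (C : ℤ → ℝ) (δ : ℝ) (Z : Fin g → ℝ) : ℝ :=
  theta g (Kmat g C + δ • Jmat g) Z

/-- `Q̃_n`. -/
def Qtil (C : ℤ → ℝ) (Z0 : Fin g → ℝ) (n0 : ℤ) (δ : ℝ) (n : ℤ) : ℝ :=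
  thetaTil g C δ (Ztil g C Z0 n0 δ (n - 1) 0) + thetaTil g C δ (Ztil g C Z0 n0 δ n 1)
    - thetaTil g C δ (Ztil g C Z0 n0 δ (n - 1) 1) - thetaTil g C δ (Ztil g C Z0 n0 δ n 0)

/-- `W̃_n`. -/
def Wtil (C : ℤ → ℝ) (Z0 : Fin g → ℝ) (n0 : ℤ) (δ : ℝ) (n : ℤ) : ℝ :=
  (Lc g C + δ) + thetaTil g C δ (Ztil g C Z0 n0 δ (n - 1) 1)
    + thetaTil g C δ (Ztil g C Z0 n0 δ (n + 1) 0)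
    - thetaTil g C δ (Ztil g C Z0 n0 δ n 0) - thetaTil g C δ (Ztil g C Z0 n0 δ n 1)

end TropToda

/-!
Monotonicity of `λ` (the generic condition) makes the minima in `p_i` explicit and gives the
recursion `p_{i+1} = p_i - 2(g - i)(λ_{i+1} - λ_i)`. The tridiagonal `K` is the matrix of the
form `∑_{i=0}^{g} p_i (x_{i+1} - x_i)² + 2 ∑_{i=1}^{g} (λ_i - λ_{i-1}) x_i²`, where
`x_0 = x_{g+1} = 0`.
Bordered by zeros, `ĝ` has constant difference `-1` except at the left end, so the recursion
kills every entry of `ĝK` but the first, which is `(g + 1)L`. Since `p_i > 0` and `λ` is strictly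
increasing, the form is coercive, so the terms of `Θ` are bounded below and `Θ` is a genuine
infimum. Replacing `Z` by `Z - nK` re-indexes these terms by `m ↦ m - n` and adds
`n Zᵀ - ½ nKnᵀ`; taking `n = ĝ` gives both consequences.
-/

namespace TropToda

lemma sum_Icc_one_eq_sum_range (f : ℕ → ℝ) (n : ℕ) :
    ∑ j ∈ Icc 1 n, f j = ∑ k ∈ range n, f (k + 1) := by
  induction n with
  | zero => simp
  | succ n ih => rw [sum_Icc_succ_top (by omega), ih, sum_range_succ]

lemma sum_range_mul_sub_eq_sum_Icc_sub (f : ℕ → ℝ) (n : ℕ) :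
    ∑ k ∈ range n, ((n : ℝ) - k) * (f (k + 1) - f k) = ∑ j ∈ Icc 1 n, (f j - f 0) := by
  induction n with
  | zero => simp
  | succ n ih =>
    have hsplit : ∀ k ∈ range (n + 1), (((n + 1 : ℕ) : ℝ) - k) * (f (k + 1) - f k)
        = ((n : ℝ) - k) * (f (k + 1) - f k) + (f (k + 1) - f k) := by
      intro k _
      push_cast
      ring
    rw [sum_congr rfl hsplit, sum_add_distrib, sum_range_sub, sum_range_succ, ih,
      sum_Icc_succ_top (by omega)]
    simp

lemma sum_range_sub_mul_eq_sum_mul_sub (D y : ℕ → ℝ) {n : ℕ} (h0 : y 0 = 0)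
    (hn : y (n + 1) = 0) :
    ∑ k ∈ range n, (D k - D (k + 1)) * y (k + 1)
      = ∑ k ∈ range (n + 1), D k * (y (k + 1) - y k) := by
  simp only [sub_mul, mul_sub, sum_sub_distrib]
  rw [sum_range_succ (fun k => D k * y (k + 1)), sum_range_succ' (fun k => D k * y k), h0, hn]
  ring

section Theta

variable {g : ℕ} {K : Matrix (Fin g) (Fin g) ℝ}

lemma bddBelow_range_thetaTerm {d : Fin g → ℝ} (hd : ∀ i, 0 < d i)
    (hK : ∀ x : Fin g → ℝ, ∑ i, d i * x i ^ 2 ≤ vecMul x K ⬝ᵥ x) (Z : Fin g → ℝ) :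
    BddBelow (Set.range fun m : Fin g → ℤ => thetaTerm g K m Z) := by
  refine ⟨∑ i, -Z i ^ 2 / (2 * d i), ?_⟩
  rintro _ ⟨m, rfl⟩
  set x : Fin g → ℝ := fun i => (m i : ℝ)
  calc ∑ i, -Z i ^ 2 / (2 * d i) ≤ ∑ i, ((1 / 2) * (d i * x i ^ 2) + x i * Z i) := by
        gcongr with i
        have := hd i
        rw [div_le_iff₀ (by positivity)]
        nlinarith [sq_nonneg (d i * x i + Z i)]
    _ = (1 / 2) * ∑ i, d i * x i ^ 2 + x ⬝ᵥ Z := by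
        rw [sum_add_distrib, mul_sum]
        rfl
    _ ≤ thetaTerm g K m Z := by
        unfold thetaTerm
        linarith [hK x]

lemma vecMul_dotProduct_comm (hK : K.IsSymm) (u v : Fin g → ℝ) :
    vecMul u K ⬝ᵥ v = vecMul v K ⬝ᵥ u := by
  rw [← dotProduct_mulVec, ← vecMul_transpose, hK.eq, dotProduct_comm]

lemma thetaTerm_sub_vecMul (hK : K.IsSymm) (m n : Fin g → ℤ) (Z : Fin g → ℝ) :
    thetaTerm g K m (Z - vecMul (fun i => (n i : ℝ)) K)
      = thetaTerm g K (m - n) Z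
        + ((fun i => (n i : ℝ)) ⬝ᵥ Z
          - (1 / 2) * (vecMul (fun i => (n i : ℝ)) K ⬝ᵥ fun i => (n i : ℝ))) := by
  have hcast : (fun i => ((m - n) i : ℝ)) = (fun i => (m i : ℝ)) - fun i => (n i : ℝ) := by
    ext i
    simp
  simp only [thetaTerm, hcast]
  set u : Fin g → ℝ := fun i => (m i : ℝ)
  set v : Fin g → ℝ := fun i => (n i : ℝ)
  have huv : u ⬝ᵥ vecMul v K = vecMul u K ⬝ᵥ v := by
    rw [dotProduct_comm, vecMul_dotProduct_comm hK]
  simp only [sub_vecMul, sub_dotProduct, dotProduct_sub, huv, vecMul_dotProduct_comm hK v u]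
  ring

lemma theta_sub_vecMul (hK : K.IsSymm) {Z : Fin g → ℝ}
    (hZ : BddBelow (Set.range fun m : Fin g → ℤ => thetaTerm g K m Z)) (n : Fin g → ℤ) :
    theta g K (Z - vecMul (fun i => (n i : ℝ)) K)
      = theta g K Z
        + ((fun i => (n i : ℝ)) ⬝ᵥ Z
          - (1 / 2) * (vecMul (fun i => (n i : ℝ)) K ⬝ᵥ fun i => (n i : ℝ))) := by
  set c := (fun i => (n i : ℝ)) ⬝ᵥ Z
    - (1 / 2) * (vecMul (fun i => (n i : ℝ)) K ⬝ᵥ fun i => (n i : ℝ))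
  have hrange : (Set.range fun m => thetaTerm g K m (Z - vecMul (fun i => (n i : ℝ)) K))
      = (· + c) '' Set.range fun m => thetaTerm g K m Z := by
    simp_rw [thetaTerm_sub_vecMul hK]
    change Set.range (((· + c) ∘ fun m => thetaTerm g K m Z) ∘ Equiv.subRight n) = _
    rw [(Equiv.subRight n).surjective.range_comp, Set.range_comp]
  rw [theta, theta, hrange]
  exact ((OrderIso.addRight c).map_csInf' (Set.range_nonempty _) hZ).symm

lemma sub_vecMul_mem_Dset (hK : K.IsSymm) {Z : Fin g → ℝ}
    (hZ : BddBelow (Set.range fun m : Fin g → ℤ => thetaTerm g K m Z)) {m : Fin g → ℤ}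
    (hm : Z ∈ Dset g K m) (n : Fin g → ℤ) :
    Z - vecMul (fun i => (n i : ℝ)) K ∈ Dset g K (m + n) := by
  change theta g K _ = thetaTerm g K _ _
  rw [theta_sub_vecMul hK hZ, thetaTerm_sub_vecMul hK, add_sub_cancel_right,
    show theta g K Z = thetaTerm g K m Z from hm]

end Theta

variable {g : ℕ} {C : ℤ → ℝ}

lemma lam_zero : lam g C 0 = C g := if_pos rfl

lemma lam_succ (k : ℕ) : lam g C (k + 1) = C (g - (k + 1 : ℕ)) - C (g - k) := by
  rw [lam, if_neg k.succ_ne_zero]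
  congr 2
  push_cast
  ring

lemma sum_Icc_lam : ∑ j ∈ Icc 1 g, lam g C j = C 0 - C g := by
  rw [sum_Icc_one_eq_sum_range]
  simp only [lam_succ]
  rw [sum_range_sub (fun k : ℕ => C (g - k))]
  simp

lemma lam_lt_lam_succ (hC : Generic g C) {i : ℕ} (hi : i < g) :
    lam g C i < lam g C (i + 1) := by
  rcases i with _ | k
  · have := hC.2.2
    simp only [lam_zero, lam_succ]
    push_cast
    simp only [sub_zero]
    linarith
  · have := hC.2.1 (g - (k + 2)) (by omega) (by omega)
    rw [show (g : ℤ) - (k + 2) + 2 = g - k by ring,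
      show (g : ℤ) - (k + 2) + 1 = g - (k + 1) by ring] at this
    simp only [lam_succ]
    push_cast
    rw [show (g : ℤ) - (k + 1 + 1) = g - (k + 2) by ring]
    linarith

lemma lam_monotoneOn (hC : Generic g C) : MonotoneOn (lam g C) (Set.Iic g) :=
  (strictMonoOn_Iic_of_lt_succ fun m hm => by
    simpa [Order.succ_eq_add_one] using lam_lt_lam_succ hC hm).monotoneOn

lemma pc_eq (hC : Generic g C) (i : ℕ) :
    pc g C i = Lc g C - 2 * ∑ j ∈ Icc 1 g,
      min (lam g C i - lam g C 0) (lam g C j - lam g C 0) := by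
  rcases i with _ | i
  · have hmin : ∀ j ∈ Icc 1 g, min 0 (lam g C j - lam g C 0) = 0 := by
      intro j hj
      have := lam_monotoneOn hC (Set.mem_Iic.2 (Nat.zero_le g))
        (Set.mem_Iic.2 (mem_Icc.1 hj).2) (Nat.zero_le j)
      simp [this]
    rw [pc, if_pos rfl, sub_self, sum_congr rfl hmin, sum_const_zero, mul_zero, sub_zero]
  · exact if_neg i.succ_ne_zero

lemma pc_succ (hC : Generic g C) {i : ℕ} (hi : i < g) :
    pc g C (i + 1) = pc g C i - 2 * ((g : ℝ) - i) * (lam g C (i + 1) - lam g C i) := by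
  have hmono := lam_monotoneOn hC
  have hlow : ∀ j ∈ Ioc 0 i, min (lam g C (i + 1) - lam g C 0) (lam g C j - lam g C 0)
      - min (lam g C i - lam g C 0) (lam g C j - lam g C 0) = 0 := by
    intro j hj
    have hj := mem_Ioc.1 hj
    have h1 := hmono (Set.mem_Iic.2 (by omega)) (Set.mem_Iic.2 (by omega))
      (by omega : j ≤ i + 1)
    have h2 := hmono (Set.mem_Iic.2 (by omega)) (Set.mem_Iic.2 (by omega)) hj.2
    rw [min_eq_right (by linarith), min_eq_right (by linarith), sub_self]
  have hhigh : ∀ j ∈ Ioc i g, min (lam g C (i + 1) - lam g C 0) (lam g C j - lam g C 0)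
      - min (lam g C i - lam g C 0) (lam g C j - lam g C 0) = lam g C (i + 1) - lam g C i := by
    intro j hj
    have hj := mem_Ioc.1 hj
    have h1 := hmono (Set.mem_Iic.2 (by omega)) (Set.mem_Iic.2 hj.2) (by omega : i + 1 ≤ j)
    have h2 := hmono (Set.mem_Iic.2 (by omega)) (Set.mem_Iic.2 hj.2) hj.1.le
    rw [min_eq_left (by linarith), min_eq_left (by linarith)]
    ring
  have hdiff : ∑ j ∈ Icc 1 g, (min (lam g C (i + 1) - lam g C 0) (lam g C j - lam g C 0)
      - min (lam g C i - lam g C 0) (lam g C j - lam g C 0))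
      = ((g : ℝ) - i) * (lam g C (i + 1) - lam g C i) := by
    rw [show Icc 1 g = Ioc 0 g from Icc_add_one_left_eq_Ioc 0 g,
      ← sum_Ioc_consecutive _ (Nat.zero_le i) hi.le,
      sum_congr rfl hlow, sum_congr rfl hhigh, sum_const_zero, zero_add, sum_const,
      Nat.card_Ioc, nsmul_eq_mul, Nat.cast_sub hi.le]
  rw [pc_eq hC, pc_eq hC, mul_assoc, ← hdiff, sum_sub_distrib]
  ring

lemma pc_pos (hC : Generic g C) (i : ℕ) : 0 < pc g C i := by
  have hsum : Lc g C - 2 * ∑ j ∈ Icc 1 g, (lam g C j - lam g C 0) = C (-1) - 2 * C 0 := by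
    rw [sum_sub_distrib, sum_Icc_lam, sum_const, Nat.card_Icc, lam_zero, Lc]
    simp only [add_tsub_cancel_right, nsmul_eq_mul]
    ring
  calc 0 < C (-1) - 2 * C 0 := by linarith [hC.1]
    _ = Lc g C - 2 * ∑ j ∈ Icc 1 g, (lam g C j - lam g C 0) := hsum.symm
    _ ≤ pc g C i := by
        rw [pc_eq hC]
        gcongr
        exact min_le_right _ _

lemma isSymm_Kmat : (Kmat g C).IsSymm := by
  ext a b
  simp only [transpose_apply, Kmat, Fin.ext_iff]
  split_ifs <;> first | omega | simp_all

/-- `x` in the paper's 1-based indexing, bordered by `x_0 = x_{g+1} = 0`. -/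
def pad (x : Fin g → ℝ) : ℕ → ℝ
  | 0 => 0
  | k + 1 => if h : k < g then x ⟨k, h⟩ else 0

lemma pad_succ_val (x : Fin g → ℝ) (i : Fin g) : pad x (i + 1) = x i := dif_pos i.isLt

lemma sum_mul_ite_succ_eq (x : Fin g → ℝ) (k : ℕ) (c : ℝ) :
    ∑ a, x a * (if (a : ℕ) + 1 = k then c else 0) = pad x k * c := by
  rcases k with _ | k
  · simp [pad]
  · by_cases hk : k < g
    · simp [pad, hk, ← Fin.ext_iff (b := (⟨k, hk⟩ : Fin g))]
    · simp [pad, hk, fun a : Fin g => ne_of_lt (lt_of_lt_of_le a.isLt (not_lt.1 hk))]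

lemma vecMul_Kmat_apply (x : Fin g → ℝ) (b : Fin g) :
    vecMul x (Kmat g C) b = pc g C b * (pad x (b + 1) - pad x b)
      - pc g C (b + 1) * (pad x (b + 2) - pad x (b + 1))
      + 2 * (lam g C (b + 1) - lam g C b) * pad x (b + 1) := by
  have hcol : ∀ a : Fin g, Kmat g C a b =
      (if (a : ℕ) + 1 = b + 1 then
        pc g C b + pc g C (b + 1) + 2 * (lam g C (b + 1) - lam g C b) else 0)
      + (if (a : ℕ) + 1 = b then -pc g C b else 0)
      + (if (a : ℕ) + 1 = b + 2 then -pc g C (b + 1) else 0) := by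
    intro a
    simp only [Kmat, Fin.ext_iff]
    split_ifs <;> first | omega | simp_all
  simp only [vecMul, dotProduct, hcol, mul_add, sum_add_distrib, sum_mul_ite_succ_eq]
  ring

lemma vecMul_Kmat_dotProduct (x : Fin g → ℝ) :
    vecMul x (Kmat g C) ⬝ᵥ x
      = ∑ k ∈ range (g + 1), pc g C k * (pad x (k + 1) - pad x k) ^ 2
        + ∑ k ∈ range g, 2 * (lam g C (k + 1) - lam g C k) * pad x (k + 1) ^ 2 := by
  have hpad : pad x (g + 1) = 0 := dif_neg (lt_irrefl g)
  rw [dotProduct]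
  simp only [vecMul_Kmat_apply, ← pad_succ_val x]
  rw [Fin.sum_univ_eq_sum_range (fun k => (pc g C k * (pad x (k + 1) - pad x k)
      - pc g C (k + 1) * (pad x (k + 2) - pad x (k + 1))
      + 2 * (lam g C (k + 1) - lam g C k) * pad x (k + 1)) * pad x (k + 1)) g]
  simp only [add_mul, sum_add_distrib]
  rw [sum_range_sub_mul_eq_sum_mul_sub
    (fun k => pc g C k * (pad x (k + 1) - pad x k)) _ rfl hpad]
  congr 1 <;> refine sum_congr rfl fun k _ => by ring

lemma sum_mul_sq_le_vecMul_Kmat_dotProduct (hC : Generic g C) (x : Fin g → ℝ) :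
    ∑ i : Fin g, 2 * (lam g C (i + 1) - lam g C i) * x i ^ 2
      ≤ vecMul x (Kmat g C) ⬝ᵥ x := by
  rw [vecMul_Kmat_dotProduct]
  simp only [← pad_succ_val x]
  rw [Fin.sum_univ_eq_sum_range
    (fun k => 2 * (lam g C (k + 1) - lam g C k) * pad x (k + 1) ^ 2) g]
  have := sum_nonneg fun k (_ : k ∈ range (g + 1)) =>
    mul_nonneg (pc_pos hC k).le (sq_nonneg (pad x (k + 1) - pad x k))
  linarith

lemma bddBelow_range_thetaTerm_Kmat (hC : Generic g C) (Z : Fin g → ℝ) :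
    BddBelow (Set.range fun m : Fin g → ℤ => thetaTerm g (Kmat g C) m Z) :=
  bddBelow_range_thetaTerm (fun i => by linarith [lam_lt_lam_succ hC i.isLt])
    (sum_mul_sq_le_vecMul_Kmat_dotProduct hC) Z

def ghat (g : ℕ) : Fin g → ℤ := fun i => g - i

lemma ghat_cast : (fun i => (ghat g i : ℝ)) = fun i : Fin g => (g : ℝ) - (i : ℕ) := by
  ext i
  simp [ghat]

lemma pad_ghat {k : ℕ} (hk₁ : 1 ≤ k) (hk : k ≤ g + 1) :
    pad (fun i : Fin g => (g : ℝ) - (i : ℕ)) k = g + 1 - k := by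
  obtain ⟨j, rfl⟩ : ∃ j, k = j + 1 := ⟨k - 1, by omega⟩
  by_cases hj : j < g
  · simp only [pad, dif_pos hj]
    push_cast
    ring
  · simp only [pad, dif_neg hj]
    rw [show j = g by omega]
    push_cast
    ring

lemma vecMul_ghat_Kmat (hC : Generic g C) :
    vecMul (fun i : Fin g => (g : ℝ) - (i : ℕ)) (Kmat g C)
      = fun i => ((g : ℝ) + 1) * Lc g C * e1 g i := by
  funext b
  have hb := b.isLt
  rw [vecMul_Kmat_apply, pad_ghat (k := b + 1) (by omega) (by omega),
    pad_ghat (k := b + 2) (by omega) (by omega), pc_succ hC hb]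
  rcases b with ⟨_ | k, hk⟩
  · rw [show pc g C 0 = Lc g C from if_pos rfl, show e1 g ⟨0, hk⟩ = 1 from if_pos rfl,
      show pad (fun i : Fin g => (g : ℝ) - (i : ℕ)) 0 = 0 from rfl]
    push_cast
    ring
  · rw [pad_ghat (k := k + 1) (by omega) (by omega),
      show e1 g ⟨k + 1, hk⟩ = 0 from if_neg k.succ_ne_zero]
    push_cast
    ring

lemma ghat_dotProduct_e1 : (fun i : Fin g => (g : ℝ) - (i : ℕ)) ⬝ᵥ e1 g = g := by
  rcases g with _ | g
  · simp
  · simp [dotProduct, e1]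

lemma ghat_dotProduct_lamvec :
    (fun i : Fin g => (g : ℝ) - (i : ℕ)) ⬝ᵥ lamvec g C
      = ∑ j ∈ Icc 1 g, (lam g C j - lam g C 0) := by
  rw [dotProduct, ← sum_range_mul_sub_eq_sum_Icc_sub]
  exact Fin.sum_univ_eq_sum_range (fun k => ((g : ℝ) - k) * (lam g C (k + 1) - lam g C k)) g

lemma Zpt_add_succ (Z0 : Fin g → ℝ) (n t : ℤ) :
    Zpt g C Z0 (n + g + 1) t = fun i => Zpt g C Z0 n t i - ((g : ℝ) + 1) * Lc g C * e1 g i := by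
  funext i
  simp only [Zpt]
  push_cast
  ring

lemma ghat_dotProduct_Zpt (Z0 : Fin g → ℝ) (n t : ℤ) :
    (fun i : Fin g => (g : ℝ) - (i : ℕ)) ⬝ᵥ Zpt g C Z0 n t
      = -(g : ℝ) * Lc g C * n + (∑ j ∈ Icc 1 g, (lam g C j - lam g C 0)) * t
        + (fun i : Fin g => (g : ℝ) - (i : ℕ)) ⬝ᵥ Z0 := by
  have hZ : Zpt g C Z0 n t = Z0 - ((n : ℝ) * Lc g C) • e1 g + (t : ℝ) • lamvec g C := by
    funext i
    simp only [Zpt, Pi.add_apply, Pi.sub_apply, Pi.smul_apply, smul_eq_mul]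
  rw [hZ, dotProduct_add, dotProduct_sub, dotProduct_smul, dotProduct_smul, ghat_dotProduct_e1,
    ghat_dotProduct_lamvec, smul_eq_mul, smul_eq_mul]
  ring

end TropToda

open TropToda in
theorem ghat_K_and_quasiperiodicity_general
    (g : ℕ) (C : ℤ → ℝ) (hC : Generic g C) :
    (Matrix.vecMul (fun i : Fin g => (g : ℝ) - (i : ℕ)) (Kmat g C)
        = fun i : Fin g => ((g : ℝ) + 1) * Lc g C * e1 g i) ∧
    (∀ m : Fin g → ℤ, ∀ Z : Fin g → ℝ, Z ∈ Dset g (Kmat g C) m →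
        ((fun i : Fin g => Z i - ((g : ℝ) + 1) * Lc g C * e1 g i)
            ∈ Dset g (Kmat g C) (fun i : Fin g => m i + ((g : ℤ) - (i : ℕ))) ∧
         ∃ l : Fin g → ℤ,
           (fun i : Fin g => Z i - ((g : ℝ) + 1) * Lc g C * e1 g i) - Z
             = Matrix.vecMul (fun j => (l j : ℝ)) (Kmat g C))) ∧
    (∀ Z0 : Fin g → ℝ, ∀ n t : ℤ,
        Tf g C Z0 (n + g + 1) t = Tf g C Z0 n t +
          (-(g : ℝ) * Lc g C * (n : ℝ)
            + (∑ i ∈ Finset.Icc 1 g, (lam g C i - lam g C 0)) * (t : ℝ)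
            + ((fun i : Fin g => (g : ℝ) - (i : ℕ)) ⬝ᵥ Z0)
            - (1/2) * (Matrix.vecMul (fun i : Fin g => (g : ℝ) - (i : ℕ)) (Kmat g C)
                ⬝ᵥ fun i : Fin g => (g : ℝ) - (i : ℕ)))) := by
  have hK : (Kmat g C).IsSymm := isSymm_Kmat
  have hghat := vecMul_ghat_Kmat hC
  have hshift : ∀ Z : Fin g → ℝ, (fun i => Z i - ((g : ℝ) + 1) * Lc g C * e1 g i)
      = Z - vecMul (fun i => (ghat g i : ℝ)) (Kmat g C) := by
    intro Z
    rw [ghat_cast, hghat]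
    rfl
  refine ⟨hghat, fun m Z hZ => ⟨?_, -ghat g, ?_⟩, fun Z0 n t => ?_⟩
  · rw [hshift]
    exact sub_vecMul_mem_Dset hK (bddBelow_range_thetaTerm_Kmat hC Z) hZ (ghat g)
  · rw [hshift, sub_sub_cancel_left, ← neg_vecMul]
    congr 1
    ext i
    simp
  · rw [Tf, Tf, Zpt_add_succ, hshift, theta_sub_vecMul hK (bddBelow_range_thetaTerm_Kmat hC _),
      ghat_cast, ghat_dotProduct_Zpt]

open TropToda in
/-- `ĝ K = (g+1)L e_1`; consequently `Z − (g+1)Le_1 ∈ D_{m+ĝ}` for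
`Z ∈ D_m`, `Z − (g+1)Le_1 ≡ Z` mod `ℤ^g K`, and `T_n^t` is quasi-periodic. -/
theorem ghat_K_and_quasiperiodicity
    (g : ℕ) (hg : 0 < g) (C : ℤ → ℝ) (hC : Generic g C) :
    (Matrix.vecMul (fun i : Fin g => (g : ℝ) - (i : ℕ)) (Kmat g C)
        = fun i : Fin g => ((g : ℝ) + 1) * Lc g C * e1 g i) ∧
    (∀ m : Fin g → ℤ, ∀ Z : Fin g → ℝ, Z ∈ Dset g (Kmat g C) m →
        ((fun i : Fin g => Z i - ((g : ℝ) + 1) * Lc g C * e1 g i)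
            ∈ Dset g (Kmat g C) (fun i : Fin g => m i + ((g : ℤ) - (i : ℕ))) ∧
         ∃ l : Fin g → ℤ,
           (fun i : Fin g => Z i - ((g : ℝ) + 1) * Lc g C * e1 g i) - Z
             = Matrix.vecMul (fun j => (l j : ℝ)) (Kmat g C))) ∧
    (∀ Z0 : Fin g → ℝ, ∀ n t : ℤ,
        Tf g C Z0 (n + g + 1) t = Tf g C Z0 n t +
          (-(g : ℝ) * Lc g C * (n : ℝ)
            + (∑ i ∈ Finset.Icc 1 g, (lam g C i - lam g C 0)) * (t : ℝ)
            + ((fun i : Fin g => (g : ℝ) - (i : ℕ)) ⬝ᵥ Z0)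
            - (1/2) * (Matrix.vecMul (fun i : Fin g => (g : ℝ) - (i : ℕ)) (Kmat g C)
                ⬝ᵥ fun i : Fin g => (g : ℝ) - (i : ℕ)))) :=
  ghat_K_and_quasiperiodicity_general g C hC
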